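/- arXiv:math/9712266 — 2 statements merged into one kernel-verified Lean document; each statement's English description precedes it below -/
import Mathlib

section
/- For an infinite path t = (v_0, v_1, …) in a branching diagram Γ, the following are equivalent: (i) all but finitely many vertices v_n in the path have v_{n-1} as their unique immediate predecessor; (ii) d(∅, t) := lim_n d(∅, v_n) < ∞; (iii) d(u, t) < ∞ for all vertices u. -/
/-- A branching diagram: a graded graph with finite levels, a unique minimal
vertex `bot` of rank `0`, no maximal vertices, and every vertex of positive
rank covering some vertex. `covers u w` means `w` covers `u` (`u ⋖ w`). -/
structure BranchingDiagram where
  V : Type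
  rank : V → ℕ
  covers : V → V → Prop
  rank_covers : ∀ u w, covers u w → rank w = rank u + 1
  finite_level : ∀ n : ℕ, {v : V | rank v = n}.Finite
  bot : V
  rank_bot : rank bot = 0
  bot_unique : ∀ v, rank v = 0 → v = bot
  no_max : ∀ v, ∃ w, covers v w
  exists_pred : ∀ v, rank v ≠ 0 → ∃ u, covers u v

/-- `Γ.d u w` is the number of saturated chains (paths along covering relations)
from `u` to `w`. -/
noncomputable def BranchingDiagram.d (Γ : BranchingDiagram) (u w : Γ.V) : ℕ :=
  Set.ncard {p : List Γ.V | p.Chain' Γ.covers ∧ p.head? = some u ∧ p.getLast? = some w}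

/-- A `1`-differential poset: (D1) for distinct vertices of equal rank, the number
of common lower covers equals the number of common upper covers; (D2) each vertex
is covered by one more vertex than it covers. -/
def BranchingDiagram.IsDifferential (Γ : BranchingDiagram) : Prop :=
  (∀ u v : Γ.V, u ≠ v → Γ.rank u = Γ.rank v →
      Set.ncard {x | Γ.covers x u ∧ Γ.covers x v} =
        Set.ncard {w | Γ.covers u w ∧ Γ.covers v w}) ∧
  (∀ v : Γ.V, Set.ncard {w | Γ.covers v w} = Set.ncard {u | Γ.covers u v} + 1)

/-!
Removing the last vertex of a saturated chain ending at `t (n + 1)` gives a chain ending at a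
lower cover of `t (n + 1)`. When `t n` is the only lower cover, this injects the chains into
`t (n + 1)` into those into `t n`, so `d u (t n)` stops growing once `t n` is above `u` and the
path no longer branches. Conversely, at every step where `t (n + 1)` has a second lower cover
`v`, the chains through `v` add at least one to `d bot (t (n + 1))`, so infinitely many such steps
make `d bot (t n)` unbounded.
-/

namespace BranchingDiagram

def chains (Γ : BranchingDiagram) (u w : Γ.V) : Set (List Γ.V) :=
  {p | p.IsChain Γ.covers ∧ p.head? = some u ∧ p.getLast? = some w}

variable {Γ : BranchingDiagram}

theorem d_eq_ncard_chains (u w : Γ.V) : Γ.d u w = (Γ.chains u w).ncard := rfl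

theorem concat_mem_chains {u v w : Γ.V} {p : List Γ.V} (hvw : Γ.covers v w)
    (hp : p ∈ Γ.chains u v) : p ++ [w] ∈ Γ.chains u w := by
  obtain ⟨hc, hh, hl⟩ := hp
  have hne : p ≠ [] := by rintro rfl; simp at hh
  refine ⟨hc.append (List.isChain_singleton w) ?_, ?_, List.getLast?_concat⟩
  · simp_all
  · rwa [List.head?_append_of_ne_nil _ hne]

theorem eq_singleton_or_dropLast_mem_chains {u w : Γ.V} {p : List Γ.V}
    (hp : p ∈ Γ.chains u w) :
    p = [w] ∨ ∃ x, Γ.covers x w ∧ p.dropLast ∈ Γ.chains u x := by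
  obtain ⟨hc, hh, hl⟩ := hp
  have hp_eq : p.dropLast ++ [w] = p := List.dropLast_append_getLast? w hl
  rcases eq_or_ne p.dropLast [] with hq | hq
  · left
    simpa [hq] using hp_eq.symm
  · right
    have hlast : p.dropLast.getLast? = some (p.dropLast.getLast hq) :=
      List.getLast?_eq_some_getLast hq
    rw [← hp_eq] at hc hh
    obtain ⟨hcq, -, hlink⟩ := List.isChain_append.1 hc
    refine ⟨_, hlink _ hlast w rfl, hcq, ?_, hlast⟩
    rwa [List.head?_append_of_ne_nil _ hq] at hh

theorem finite_setOf_covers (w : Γ.V) : {x | Γ.covers x w}.Finite :=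
  (Γ.finite_level (Γ.rank w - 1)).subset fun x hx => by
    have := Γ.rank_covers x w hx
    simp only [Set.mem_ofPred_eq]
    omega

theorem chains_subset (u w : Γ.V) :
    Γ.chains u w ⊆ insert [w] (⋃ x ∈ {x | Γ.covers x w}, (· ++ [w]) '' Γ.chains u x) := by
  intro p hp
  rcases eq_singleton_or_dropLast_mem_chains hp with rfl | ⟨x, hx, hq⟩
  · exact Set.mem_insert _ _
  · refine Set.mem_insert_of_mem _ (Set.mem_biUnion hx ⟨_, hq, ?_⟩)
    exact List.dropLast_append_getLast? w hp.2.2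

theorem chains_finite (u w : Γ.V) : (Γ.chains u w).Finite := by
  induction hn : Γ.rank w using Nat.strong_induction_on generalizing w with
  | _ n ih =>
    refine (Set.Finite.insert _ ((finite_setOf_covers w).biUnion fun x hx => ?_)).subset
      (chains_subset u w)
    have := Γ.rank_covers x w hx
    exact (ih _ (by omega) x rfl).image _

theorem chains_bot_nonempty (v : Γ.V) : (Γ.chains Γ.bot v).Nonempty := by
  induction hn : Γ.rank v using Nat.strong_induction_on generalizing v with
  | _ n ih =>
    by_cases hv : Γ.rank v = 0
    · rw [Γ.bot_unique v hv]
      exact ⟨[Γ.bot], List.isChain_singleton _, rfl, rfl⟩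
    · obtain ⟨x, hx⟩ := Γ.exists_pred v hv
      have := Γ.rank_covers x v hx
      obtain ⟨p, hp⟩ := ih _ (by omega) x rfl
      exact ⟨p ++ [v], concat_mem_chains hx hp⟩

theorem d_bot_pos (v : Γ.V) : 0 < Γ.d Γ.bot v := by
  rw [d_eq_ncard_chains]
  exact (Set.ncard_pos (chains_finite _ _)).2 (chains_bot_nonempty v)

theorem d_le_d_of_covers {u v w : Γ.V} (hvw : Γ.covers v w) : Γ.d u v ≤ Γ.d u w := by
  rw [d_eq_ncard_chains, d_eq_ncard_chains]
  exact Set.ncard_le_ncard_of_injOn (· ++ [w]) (fun _ hp => concat_mem_chains hvw hp)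
    (List.append_left_injective _).injOn (chains_finite u w)

theorem d_add_d_le_of_covers {u v v' w : Γ.V} (hvw : Γ.covers v w) (hv'w : Γ.covers v' w)
    (hne : v ≠ v') : Γ.d u v + Γ.d u v' ≤ Γ.d u w := by
  have hinj := List.append_left_injective [w]
  have hdisj : Disjoint ((· ++ [w]) '' Γ.chains u v) ((· ++ [w]) '' Γ.chains u v') := by
    rw [Set.disjoint_left]
    rintro _ ⟨p, hp, rfl⟩ ⟨q, hq, hqp⟩
    rw [hinj hqp] at hq
    exact hne (Option.some_injective _ (hp.2.2.symm.trans hq.2.2))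
  simp only [d_eq_ncard_chains]
  calc (Γ.chains u v).ncard + (Γ.chains u v').ncard
      = ((· ++ [w]) '' Γ.chains u v ∪ (· ++ [w]) '' Γ.chains u v').ncard := by
        rw [Set.ncard_union_eq hdisj ((chains_finite _ _).image _) ((chains_finite _ _).image _),
          Set.ncard_image_of_injective _ hinj, Set.ncard_image_of_injective _ hinj]
    _ ≤ (Γ.chains u w).ncard := Set.ncard_le_ncard
        (Set.union_subset (Set.image_subset_iff.2 fun _ hp => concat_mem_chains hvw hp)
          (Set.image_subset_iff.2 fun _ hp => concat_mem_chains hv'w hp))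
        (chains_finite u w)

theorem d_le_d_of_forall_covers_eq {u v w : Γ.V} (huw : u ≠ w)
    (hw : ∀ x, Γ.covers x w → x = v) : Γ.d u w ≤ Γ.d u v := by
  rw [d_eq_ncard_chains, d_eq_ncard_chains]
  refine Set.ncard_le_ncard_of_injOn List.dropLast (fun p hp => ?_) (fun p hp q hq hpq => ?_)
    (chains_finite u v)
  · rcases eq_singleton_or_dropLast_mem_chains hp with rfl | ⟨x, hx, hq⟩
    · exact absurd (Option.some_injective _ hp.2.1).symm huw
    · rwa [← hw x hx]
  · rw [← List.dropLast_append_getLast? w hp.2.2, ← List.dropLast_append_getLast? w hq.2.2, hpq]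

section Path

variable {t : ℕ → Γ.V} (ht : ∀ n, Γ.covers (t n) (t (n + 1)))
include ht

theorem rank_path (n : ℕ) : Γ.rank (t n) = Γ.rank (t 0) + n := by
  induction n with
  | zero => rfl
  | succ n ih => rw [Γ.rank_covers _ _ (ht n), ih, add_assoc]

theorem monotone_d_path (u : Γ.V) : Monotone fun n => Γ.d u (t n) :=
  monotone_nat_of_le_succ fun n => d_le_d_of_covers (ht n)

theorem bdd_d_path_of_eventually_covers_eq {N : ℕ}
    (hN : ∀ n, N ≤ n → ∀ u, Γ.covers u (t (n + 1)) → u = t n) (u : Γ.V) :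
    ∃ C, ∀ n, Γ.d u (t n) ≤ C := by
  set M := max N (Γ.rank u)
  have h_tail : ∀ n, M ≤ n → Γ.d u (t n) ≤ Γ.d u (t M) := by
    intro n hn
    induction n, hn using Nat.le_induction with
    | base => exact le_rfl
    | succ n hn ih =>
      refine le_trans (d_le_d_of_forall_covers_eq (fun hu => ?_) (hN n (by omega))) ih
      have := rank_path ht (n + 1)
      rw [← hu] at this
      omega
  refine ⟨Γ.d u (t M), fun n => ?_⟩
  rcases le_total n M with hn | hn
  · exact monotone_d_path ht u hn
  · exact h_tail n hn

theorem eventually_covers_eq_of_bdd_d_bot_path (hC : ∃ C, ∀ n, Γ.d Γ.bot (t n) ≤ C) :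
    ∃ N, ∀ n, N ≤ n → ∀ u, Γ.covers u (t (n + 1)) → u = t n := by
  obtain ⟨C, hC⟩ := hC
  by_contra! hbranch
  have h_unbdd : ∀ c, ∃ n, c ≤ Γ.d Γ.bot (t n) := by
    intro c
    induction c with
    | zero => exact ⟨0, Nat.zero_le _⟩
    | succ c ih =>
      obtain ⟨n, hn⟩ := ih
      obtain ⟨m, hnm, v, hv, hvm⟩ := hbranch n
      refine ⟨m + 1, ?_⟩
      have : Γ.d Γ.bot (t n) ≤ Γ.d Γ.bot (t m) := monotone_d_path ht Γ.bot hnm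
      have := d_add_d_le_of_covers (u := Γ.bot) (ht m) hv hvm.symm
      have := d_bot_pos v
      omega
  obtain ⟨n, hn⟩ := h_unbdd (C + 1)
  exact absurd (hC n) (by omega)

end Path

end BranchingDiagram

/-- For an infinite path `t` in a branching diagram, the following are equivalent:
(i) all but finitely many vertices `t (n+1)` have `t n` as unique immediate
predecessor; (ii) `d(∅,t) < ∞`; (iii) `d(u,t) < ∞` for all vertices `u`.
(Finiteness of the limit of the weakly increasing integer sequence `n ↦ d(u, t n)`
is expressed as boundedness.) -/
theorem stmt_7 (Γ : BranchingDiagram) (t : ℕ → Γ.V)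
    (ht : ∀ n, Γ.covers (t n) (t (n + 1))) :
    ((∃ N, ∀ n, N ≤ n → ∀ u, Γ.covers u (t (n + 1)) → u = t n) ↔
        (∃ C, ∀ n, Γ.d Γ.bot (t n) ≤ C)) ∧
    ((∃ C, ∀ n, Γ.d Γ.bot (t n) ≤ C) ↔
        (∀ u, ∃ C, ∀ n, Γ.d u (t n) ≤ C)) := by
  have h_bdd : (∃ N, ∀ n, N ≤ n → ∀ u, Γ.covers u (t (n + 1)) → u = t n) →
      ∀ u, ∃ C, ∀ n, Γ.d u (t n) ≤ C :=
    fun ⟨_, hN⟩ => BranchingDiagram.bdd_d_path_of_eventually_covers_eq ht hN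
  have h_unique := BranchingDiagram.eventually_covers_eq_of_bdd_d_bot_path ht
  exact ⟨⟨fun h => h_bdd h Γ.bot, h_unique⟩, ⟨fun h => h_bdd (h_unique h), fun h => h Γ.bot⟩⟩
end

section
/- The contraction operators C_τ on harmonic functions of a 1-differential poset satisfy the semigroup law C_t(C_s(φ)) = C_{st}(φ) for 0 ≤ s, t ≤ 1, together with C_1(φ) = φ and C_0(φ) = φ_P, the Plancherel harmonic function. -/
/-- The contraction `C_τ(φ)(v) = Σ_{k=0}^{n} (τ^k (1−τ)^{n−k}/(n−k)!) Σ_{|u|=k} φ(u) d(u,v)`,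
where `n = |v|`. -/
noncomputable def BranchingDiagram.contract (Γ : BranchingDiagram) (τ : ℝ)
    (φ : Γ.V → ℝ) : Γ.V → ℝ := fun v =>
  ∑ k ∈ Finset.range (Γ.rank v + 1),
    τ ^ k * (1 - τ) ^ (Γ.rank v - k) / (Γ.rank v - k).factorial *
      ∑ᶠ u ∈ {u : Γ.V | Γ.rank u = k}, φ u * (Γ.d u v : ℝ)

/-!
Cutting saturated chains at rank `k` gives `d(w, v) = Σ_{|u| = k} d(w, u) d(u, v)` for
`|w| ≤ k ≤ |v|`. Substituting `C_s φ` into `C_t` and applying this identity collapses the middle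
level, so `C_t(C_s φ)(v) = Σ_j (Σ_k c_t(n, k) c_s(k, j)) Σ_{|w| = j} φ(w) d(w, v)`, where
`c_τ(n, k) = τ^k (1-τ)^(n-k) / (n-k)!`; the inner sum is `c_{st}(n, j)` by the binomial theorem
applied to `1 - st = t(1 - s) + (1 - t)`. At `τ = 1` (resp. `τ = 0`) only the level `n`
(resp. `0`) survives, and within one level `d(u, v) = δ_{uv}`.
-/

namespace BranchingDiagram

variable (Γ : BranchingDiagram)

def chainSet (u v : Γ.V) : Set (List Γ.V) :=
  {p | p.IsChain Γ.covers ∧ p.head? = some u ∧ p.getLast? = some v}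

theorem d_eq_ncard_chainSet (u v : Γ.V) : Γ.d u v = (Γ.chainSet u v).ncard := rfl

variable {Γ}

theorem rank_add_length_of_mem_chainSet {p : List Γ.V} {u v : Γ.V} (hp : p ∈ Γ.chainSet u v) :
    Γ.rank u + p.length = Γ.rank v + 1 := by
  induction p generalizing u with
  | nil => simp [chainSet] at hp
  | cons a q ih =>
    obtain ⟨hc, hh, hl⟩ := hp
    obtain rfl : a = u := by simpa using hh
    cases q with
    | nil => simp_all
    | cons b r =>
      rw [List.isChain_cons_cons] at hc
      have := ih ⟨hc.2, rfl, by rwa [List.getLast?_cons_cons] at hl⟩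
      have := Γ.rank_covers _ _ hc.1
      simp only [List.length_cons] at *
      omega

theorem mem_chainSet_of_rank_eq {p : List Γ.V} {u v : Γ.V} (h : Γ.rank u = Γ.rank v) :
    p ∈ Γ.chainSet u v ↔ p = [u] ∧ u = v := by
  constructor
  · intro hp
    have hlen := rank_add_length_of_mem_chainSet hp
    obtain ⟨a, rfl⟩ := List.length_eq_one_iff.mp (by omega : p.length = 1)
    obtain ⟨-, hh, hl⟩ := hp
    simp_all
  · rintro ⟨rfl, rfl⟩
    exact ⟨List.isChain_singleton _, rfl, rfl⟩

theorem d_self (u : Γ.V) : Γ.d u u = 1 := by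
  rw [d_eq_ncard_chainSet, Set.ncard_eq_one]
  exact ⟨[u], Set.ext fun p => by simp [mem_chainSet_of_rank_eq]⟩

theorem d_eq_zero_of_rank_eq {u v : Γ.V} (hne : u ≠ v) (h : Γ.rank u = Γ.rank v) :
    Γ.d u v = 0 := by
  have : Γ.chainSet u v = ∅ := Set.ext fun p => by simp [mem_chainSet_of_rank_eq h, hne]
  rw [d_eq_ncard_chainSet, this, Set.ncard_empty]

theorem chainSet_eq_biUnion {u v : Γ.V} (h : Γ.rank u < Γ.rank v) :
    Γ.chainSet u v = ⋃ x ∈ {x | Γ.covers u x}, List.cons u '' Γ.chainSet x v := by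
  ext p
  simp only [Set.mem_iUnion, Set.mem_ofPred_eq, Set.mem_image, exists_prop]
  constructor
  · intro hp
    have hlen := rank_add_length_of_mem_chainSet hp
    obtain ⟨hc, hh, hl⟩ := hp
    match p, hlen with
    | a :: b :: r, _ =>
      obtain rfl : a = u := by simpa using hh
      rw [List.isChain_cons_cons] at hc
      exact ⟨b, hc.1, b :: r, ⟨hc.2, rfl, by rwa [List.getLast?_cons_cons] at hl⟩, rfl⟩
    | [a], hlen => simp only [List.length_singleton] at hlen; omega
  · rintro ⟨x, hux, q, ⟨hc, hh, hl⟩, rfl⟩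
    obtain ⟨r, rfl⟩ : ∃ r, q = x :: r := by
      cases q with
      | nil => simp at hh
      | cons b r => exact ⟨r, by simpa using hh⟩
    exact ⟨List.isChain_cons_cons.mpr ⟨hux, hc⟩, rfl, by rwa [List.getLast?_cons_cons]⟩

variable (Γ)

theorem covers_finite (u : Γ.V) : {x | Γ.covers u x}.Finite :=
  (Γ.finite_level (Γ.rank u + 1)).subset fun x hx => Γ.rank_covers u x hx

theorem chainSet_finite (u v : Γ.V) : (Γ.chainSet u v).Finite := by
  induction hm : Γ.rank v - Γ.rank u generalizing u with
  | zero =>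
    refine (Set.finite_singleton [u]).subset fun p hp => ?_
    have hlen := rank_add_length_of_mem_chainSet hp
    have hne : p ≠ [] := by rintro rfl; simp [chainSet] at hp
    have := List.length_pos_iff.mpr hne
    exact ((mem_chainSet_of_rank_eq (by omega)).mp hp).1
  | succ m ih =>
    rw [chainSet_eq_biUnion (by omega)]
    refine (Γ.covers_finite u).biUnion fun x hx => (ih x ?_).image _
    have := Γ.rank_covers u x hx
    omega

theorem d_eq_sum_covers {u v : Γ.V} (h : Γ.rank u < Γ.rank v) :
    Γ.d u v = ∑ x ∈ (Γ.covers_finite u).toFinset, Γ.d x v := by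
  classical
  have hchains : (Γ.chainSet_finite u v).toFinset = (Γ.covers_finite u).toFinset.biUnion
      fun x => (Γ.chainSet_finite x v).toFinset.image (List.cons u) := by
    ext p
    simp [chainSet_eq_biUnion h]
  rw [d_eq_ncard_chainSet, Set.ncard_eq_toFinset_card _ (Γ.chainSet_finite u v), hchains,
    Finset.card_biUnion]
  · refine Finset.sum_congr rfl fun x _ => ?_
    rw [Finset.card_image_of_injective _ List.cons_injective, d_eq_ncard_chainSet,
      Set.ncard_eq_toFinset_card _ (Γ.chainSet_finite x v)]
  · intro x _ y _ hxy
    simp only [Finset.disjoint_left, Finset.mem_image, Set.Finite.mem_toFinset]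
    rintro _ ⟨q, hq, rfl⟩ ⟨r, hr, hrq⟩
    obtain rfl := List.cons_injective hrq
    exact hxy (Option.some.inj (hq.2.1.symm.trans hr.2.1))

noncomputable def levelFinset (k : ℕ) : Finset Γ.V := (Γ.finite_level k).toFinset

@[simp]
theorem mem_levelFinset {k : ℕ} {u : Γ.V} : u ∈ Γ.levelFinset k ↔ Γ.rank u = k :=
  Set.Finite.mem_toFinset _

theorem levelFinset_zero : Γ.levelFinset 0 = {Γ.bot} := by
  ext u
  simp only [mem_levelFinset, Finset.mem_singleton]
  exact ⟨Γ.bot_unique u, fun h => h ▸ Γ.rank_bot⟩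

theorem d_eq_sum_levelFinset {k : ℕ} {u v : Γ.V} (hu : Γ.rank u ≤ k) (hv : k ≤ Γ.rank v) :
    Γ.d u v = ∑ x ∈ Γ.levelFinset k, Γ.d u x * Γ.d x v := by
  induction hm : k - Γ.rank u generalizing u with
  | zero =>
    rw [Finset.sum_eq_single_of_mem u (by simp; omega), d_self, one_mul]
    intro x hx hxu
    rw [d_eq_zero_of_rank_eq (Ne.symm hxu) (by simp at hx; omega), zero_mul]
  | succ m ih =>
    have hcov : ∀ y ∈ (Γ.covers_finite u).toFinset, Γ.rank y = Γ.rank u + 1 := fun y hy =>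
      Γ.rank_covers u y ((Γ.covers_finite u).mem_toFinset.mp hy)
    rw [Γ.d_eq_sum_covers (by omega), Finset.sum_congr rfl fun y hy => ih (by grind) (by grind),
      Finset.sum_comm]
    refine Finset.sum_congr rfl fun x hx => ?_
    rw [← Finset.sum_mul, Γ.d_eq_sum_covers (u := u) (v := x) (by simp at hx; omega)]

noncomputable def contractWeight (τ : ℝ) (n k : ℕ) : ℝ := τ ^ k * (1 - τ) ^ (n - k) / (n - k).factorial

theorem sum_contractWeight_mul_contractWeight (s t : ℝ) {j n : ℕ} (hj : j ≤ n) :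
    ∑ k ∈ Finset.Icc j n, contractWeight t n k * contractWeight s k j =
      contractWeight (s * t) n j := by
  have hterm : ∀ i ∈ Finset.range (n - j + 1),
      contractWeight t n (j + i) * contractWeight s (j + i) j = (s * t) ^ j *
        ((t * (1 - s)) ^ i * (1 - t) ^ (n - j - i) * (n - j).choose i / (n - j).factorial) := by
    intro i hi
    have hi : i ≤ n - j := Finset.mem_range_succ_iff.mp hi
    have hfact := Nat.choose_mul_factorial_mul_factorial hi
    have hchoose : ((n - j).choose i : ℝ) ≠ 0 := by exact_mod_cast (Nat.choose_pos hi).ne'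
    unfold contractWeight
    rw [show n - (j + i) = n - j - i by omega, show j + i - j = i by omega]
    rw [← hfact, mul_pow, mul_pow]
    push_cast
    field_simp
    ring
  rw [← Finset.Ico_add_one_right_eq_Icc, Finset.sum_Ico_eq_sum_range,
    show n + 1 - j = n - j + 1 by omega, Finset.sum_congr rfl hterm, ← Finset.mul_sum,
    ← Finset.sum_div, ← add_pow, contractWeight]
  ring_nf

noncomputable def levelSum (k : ℕ) (φ : Γ.V → ℝ) (v : Γ.V) : ℝ :=
  ∑ u ∈ Γ.levelFinset k, φ u * Γ.d u v

theorem contract_apply (τ : ℝ) (φ : Γ.V → ℝ) (v : Γ.V) :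
    Γ.contract τ φ v = ∑ k ∈ Finset.range (Γ.rank v + 1),
      contractWeight τ (Γ.rank v) k * Γ.levelSum k φ v := by
  refine Finset.sum_congr rfl fun k _ => ?_
  rw [levelSum, levelFinset, ← finsum_mem_coe_finset, Set.Finite.coe_toFinset]
  rfl

theorem levelSum_levelSum (φ : Γ.V → ℝ) {j k : ℕ} {v : Γ.V} (hjk : j ≤ k)
    (hk : k ≤ Γ.rank v) :
    Γ.levelSum k (Γ.levelSum j φ) v = Γ.levelSum j φ v := by
  simp only [levelSum, Finset.sum_mul]
  rw [Finset.sum_comm]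
  refine Finset.sum_congr rfl fun w hw => ?_
  rw [Γ.d_eq_sum_levelFinset (by simp at hw; omega) hk, Nat.cast_sum, Finset.mul_sum]
  push_cast
  exact Finset.sum_congr rfl fun u _ => by ring

theorem levelSum_contract (τ : ℝ) (φ : Γ.V → ℝ) {k : ℕ} {v : Γ.V} (hk : k ≤ Γ.rank v) :
    Γ.levelSum k (Γ.contract τ φ) v =
      ∑ j ∈ Finset.range (k + 1), contractWeight τ k j * Γ.levelSum j φ v := by
  have hexpand : ∀ u ∈ Γ.levelFinset k, Γ.contract τ φ u * Γ.d u v =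
      ∑ j ∈ Finset.range (k + 1), contractWeight τ k j * (Γ.levelSum j φ u * Γ.d u v) := by
    intro u hu
    rw [contract_apply, (Γ.mem_levelFinset).mp hu, Finset.sum_mul]
    exact Finset.sum_congr rfl fun j _ => mul_assoc _ _ _
  rw [levelSum, Finset.sum_congr rfl hexpand, Finset.sum_comm]
  refine Finset.sum_congr rfl fun j hj => ?_
  rw [← Finset.mul_sum, ← levelSum, Γ.levelSum_levelSum φ (Finset.mem_range_succ_iff.mp hj) hk]

theorem contract_contract (s t : ℝ) (φ : Γ.V → ℝ) :
    Γ.contract t (Γ.contract s φ) = Γ.contract (s * t) φ := by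
  funext v
  set n := Γ.rank v
  calc Γ.contract t (Γ.contract s φ) v
      = ∑ k ∈ Finset.range (n + 1), ∑ j ∈ Finset.range (k + 1),
          contractWeight t n k * contractWeight s k j * Γ.levelSum j φ v := by
        rw [contract_apply]
        refine Finset.sum_congr rfl fun k hk => ?_
        rw [Γ.levelSum_contract s φ (Finset.mem_range_succ_iff.mp hk), Finset.mul_sum]
        exact Finset.sum_congr rfl fun j _ => (mul_assoc _ _ _).symm
    _ = ∑ j ∈ Finset.range (n + 1), (∑ k ∈ Finset.Icc j n,
          contractWeight t n k * contractWeight s k j) * Γ.levelSum j φ v := by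
        simp only [← Nat.Ico_zero_eq_range, ← Finset.Ico_add_one_right_eq_Icc, Finset.sum_mul]
        exact (Finset.sum_Ico_Ico_comm 0 (n + 1) _).symm
    _ = Γ.contract (s * t) φ v := by
        rw [contract_apply]
        refine Finset.sum_congr rfl fun j hj => ?_
        rw [sum_contractWeight_mul_contractWeight s t (Finset.mem_range_succ_iff.mp hj)]

theorem levelSum_rank_self (φ : Γ.V → ℝ) (v : Γ.V) : Γ.levelSum (Γ.rank v) φ v = φ v := by
  rw [levelSum, Finset.sum_eq_single_of_mem v (by simp), d_self, Nat.cast_one, mul_one]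
  intro u hu hne
  rw [d_eq_zero_of_rank_eq hne (by simpa using hu), Nat.cast_zero, mul_zero]

theorem contract_one (φ : Γ.V → ℝ) : Γ.contract 1 φ = φ := by
  funext v
  rw [contract_apply, Finset.sum_eq_single_of_mem _ (Finset.self_mem_range_succ _),
    levelSum_rank_self]
  · simp [contractWeight]
  · intro k hk hne
    have : Γ.rank v - k ≠ 0 := by simp at hk; omega
    simp [contractWeight, zero_pow this]

theorem contract_zero (φ : Γ.V → ℝ) (v : Γ.V) :
    Γ.contract 0 φ v = φ Γ.bot * Γ.d Γ.bot v / (Γ.rank v).factorial := by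
  rw [contract_apply, Finset.sum_eq_single_of_mem 0 (by simp), levelSum, levelFinset_zero,
    Finset.sum_singleton]
  · simp only [contractWeight, pow_zero, Nat.sub_zero, sub_zero, one_pow, one_mul]
    ring
  · intro k _ hk
    simp [contractWeight, zero_pow hk]

end BranchingDiagram

theorem stmt_13_general (Γ : BranchingDiagram) (φ : Γ.V → ℝ) (hnorm : φ Γ.bot = 1) (s t : ℝ) :
    Γ.contract t (Γ.contract s φ) = Γ.contract (s * t) φ ∧
    Γ.contract 1 φ = φ ∧
    Γ.contract 0 φ = fun v => (Γ.d Γ.bot v : ℝ) / (Γ.rank v).factorial :=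
  ⟨Γ.contract_contract s t φ, Γ.contract_one φ,
    funext fun v => by rw [Γ.contract_zero, hnorm, one_mul]⟩

/-- Semigroup law for contractions on a `1`-differential poset:
`C_t(C_s(φ)) = C_{st}(φ)`, `C_1(φ) = φ`, and `C_0(φ) = φ_P` (the Plancherel
harmonic function). -/
theorem stmt_13 (Γ : BranchingDiagram) (hΓ : Γ.IsDifferential) (φ : Γ.V → ℝ)
    (hpos : ∀ v, 0 ≤ φ v) (hnorm : φ Γ.bot = 1)
    (hharm : ∀ u, φ u = ∑ᶠ w ∈ {w | Γ.covers u w}, φ w)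
    (s t : ℝ) (hs0 : 0 ≤ s) (hs1 : s ≤ 1) (ht0 : 0 ≤ t) (ht1 : t ≤ 1) :
    Γ.contract t (Γ.contract s φ) = Γ.contract (s * t) φ ∧
    Γ.contract 1 φ = φ ∧
    Γ.contract 0 φ = fun v => (Γ.d Γ.bot v : ℝ) / (Γ.rank v).factorial :=
  stmt_13_general Γ φ hnorm s t
end
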